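/- Mixed Askey–Ismail type identity: for every q ∈ ℂ with |q| < 1, all x, y ∈ ℂ, and all integers n, m ≥ 0, ∑_{j=0}^{n} ∑_{k=0}^{m} [n,j]_q [m,k]_q q^{j(j-1)/2 + k(k-1)/2} (-y)^{j+k} h_{n+m-j-k}(x|q) = ∑_{k=0}^{min(n,m)} [n,k]_q [m,k]_q (q;q)_k q^{k(k-1)/2} (-x)^k h_{n-k}(x,y|q) h_{m-k}(x,y|q). -/
import Mathlib


/-- The q-shifted factorial `(a;q)_n = ∏_{k=0}^{n-1} (1 - a q^k)`. -/
noncomputable def qPoch (a q : ℂ) (n : ℕ) : ℂ :=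
  ∏ k ∈ Finset.range n, (1 - a * q ^ k)

/-- The infinite q-shifted factorial `(a;q)_∞ = ∏_{k=0}^{∞} (1 - a q^k)`. -/
noncomputable def qPochInf (a q : ℂ) : ℂ :=
  ∏' k : ℕ, (1 - a * q ^ k)

/-- The Gaussian binomial coefficient `[n,k]_q`. -/
noncomputable def qBinom (q : ℂ) (n k : ℕ) : ℂ :=
  qPoch q q n / (qPoch q q k * qPoch q q (n - k))

/-- The Cauchy polynomial `P_n(x,y) = ∏_{k=0}^{n-1} (x - q^k y)`. -/
noncomputable def cauchyP (q x y : ℂ) (n : ℕ) : ℂ :=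
  ∏ k ∈ Finset.range n, (x - q ^ k * y)

/-- The bivariate Rogers–Szegő polynomial `h_n(x,y|q)`. -/
noncomputable def hRS2 (q x y : ℂ) (n : ℕ) : ℂ :=
  ∑ k ∈ Finset.range (n + 1), qBinom q n k * cauchyP q x y k

/-- The Rogers–Szegő polynomial `h_n(x|q)`. -/
noncomputable def hRS (q x : ℂ) (n : ℕ) : ℂ :=
  ∑ k ∈ Finset.range (n + 1), qBinom q n k * x ^ k

/-- The continuous big q-Hermite polynomial `H_n(cos θ; a | q)`. -/
noncomputable def bigH (q a θ : ℂ) (n : ℕ) : ℂ :=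
  ∑ k ∈ Finset.range (n + 1),
    qBinom q n k * qPoch (a * Complex.exp (Complex.I * θ)) q k *
      Complex.exp (Complex.I * ((n : ℂ) - 2 * (k : ℂ)) * θ)

noncomputable def bq (q : ℂ) (n k : ℕ) : ℂ := if k ≤ n then qBinom q n k else 0

noncomputable def eq2 (q : ℂ) (j : ℕ) : ℂ := q ^ (j * (j - 1) / 2)

section basics
set_option linter.unusedSectionVars false
variable {q : ℂ} (hq : ‖q‖ < 1)

lemma qPoch_succ (a : ℂ) (n : ℕ) : qPoch a q (n+1) = qPoch a q n * (1 - a * q ^ n) := by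
  simp [qPoch, Finset.prod_range_succ]

include hq in
lemma one_sub_qpow_ne (k : ℕ) : (1 : ℂ) - q ^ (k+1) ≠ 0 := by
  intro h
  have : ‖q ^ (k+1)‖ < 1 := by
    rw [norm_pow]
    calc ‖q‖ ^ (k+1) ≤ ‖q‖ ^ 1 := by
          apply pow_le_pow_of_le_one (norm_nonneg q) hq.le; omega
    _ = ‖q‖ := pow_one _
    _ < 1 := hq
  rw [sub_eq_zero] at h
  rw [← h] at this
  simp at this

include hq in
lemma qPoch_q_ne_zero (n : ℕ) : qPoch q q n ≠ 0 := by
  induction n with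
  | zero => simp [qPoch]
  | succ k ih =>
    rw [qPoch_succ]
    refine mul_ne_zero ih ?_
    have := one_sub_qpow_ne hq k
    rwa [pow_succ'] at this

lemma qPochq_succ (n : ℕ) : qPoch q q (n+1) = qPoch q q n * (1 - q ^ (n+1)) := by
  rw [qPoch_succ, pow_succ']

lemma qPoch_zero (a : ℂ) : qPoch a q 0 = 1 := by simp [qPoch]

include hq in
lemma bq_zero (n : ℕ) : bq q n 0 = 1 := by
  simp only [bq, if_pos (Nat.zero_le n), qBinom, Nat.sub_zero, qPoch_zero, one_mul]
  exact div_self (qPoch_q_ne_zero hq n)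

include hq in
lemma bq_self (n : ℕ) : bq q n n = 1 := by
  simp only [bq, if_pos (le_refl n), qBinom, Nat.sub_self, qPoch_zero, mul_one]
  exact div_self (qPoch_q_ne_zero hq n)

lemma bq_of_gt {n k : ℕ} (h : n < k) : bq q n k = 0 := by
  simp [bq]; omega

lemma bq_eq_div {n k : ℕ} (h : k ≤ n) :
    bq q n k = qPoch q q n / (qPoch q q k * qPoch q q (n - k)) := by
  simp [bq, h, qBinom]

include hq in
lemma bq_mul_poch {n k : ℕ} (h : k ≤ n) :
    bq q n k * (qPoch q q k * qPoch q q (n - k)) = qPoch q q n := by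
  rw [bq_eq_div h, div_mul_cancel₀]
  exact mul_ne_zero (qPoch_q_ne_zero hq _) (qPoch_q_ne_zero hq _)

include hq in
lemma bq_pascal (M k : ℕ) :
    bq q (M+1) (k+1) = bq q M (k+1) + q ^ (M - k) * bq q M k := by
  rcases le_or_gt (k+1) (M+1) with h | h
  · rcases eq_or_lt_of_le h with heq | h'
    · have hk : k = M := by omega
      subst hk
      rw [bq_self hq, bq_of_gt (by omega), bq_self hq, Nat.sub_self]
      ring
    · obtain ⟨j, rfl⟩ : ∃ j, M = k + 1 + j := ⟨M - (k+1), by omega⟩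
      rw [bq_eq_div (by omega), bq_eq_div (by omega : k + 1 ≤ k + 1 + j),
        bq_eq_div (by omega : k ≤ k + 1 + j),
        (by omega : k + 1 + j - k = j + 1), (by omega : k + 1 + j + 1 - (k+1) = j + 1),
        (by omega : k + 1 + j - (k+1) = j)]
      rw [(by omega : k + 1 + j + 1 = (k + 1 + j) + 1), qPochq_succ (k+1+j),
        qPochq_succ j, qPochq_succ k,
        (by ring_nf : q ^ (k + 1 + j + 1) = q ^ (j+1) * q ^ (k+1))]
      have p0 := qPoch_q_ne_zero hq k
      have p1 := qPoch_q_ne_zero hq j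
      have n1 := one_sub_qpow_ne hq k
      have n2 := one_sub_qpow_ne hq j
      field_simp
      ring
  · rw [bq_of_gt (by omega), bq_of_gt (by omega), bq_of_gt (by omega)]
    ring

include hq in
lemma bq_tri (N a r : ℕ) :
    bq q N a * bq q (N - a) r = bq q N (a + r) * bq q (a + r) a := by
  rcases le_or_gt a N with ha | ha
  · rcases le_or_gt r (N - a) with hr | hr
    · have har : a + r ≤ N := by omega
      rw [bq_eq_div ha, bq_eq_div hr, bq_eq_div har, bq_eq_div (by omega : a ≤ a + r)]
      have e1 : N - a - r = N - (a + r) := by omega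
      have e2 : a + r - a = r := by omega
      rw [e1, e2]
      have p1 := qPoch_q_ne_zero hq a
      have p2 := qPoch_q_ne_zero hq r
      have p3 := qPoch_q_ne_zero hq (N - (a+r))
      have p4 := qPoch_q_ne_zero hq (a + r)
      have p5 := qPoch_q_ne_zero hq (N - a)
      have p6 := qPoch_q_ne_zero hq N
      field_simp
    · rw [bq_of_gt hr, bq_of_gt (by omega : N < a + r)]
      ring
  · rw [bq_of_gt ha, bq_of_gt (by omega : N < a + r)]
    ring

include hq in
lemma bq_symm_aux (a r : ℕ) : bq q (a+r) a = bq q (a+r) r := by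
  rw [bq_eq_div (by omega), bq_eq_div (by omega),
    (by omega : a + r - a = r), (by omega : a + r - r = a)]
  ring

include hq in
lemma bq_shift (m k : ℕ) :
    (1 - q ^ (m + 1 - k)) * bq q (m+1) k = (1 - q ^ (m+1)) * bq q m k := by
  rcases le_or_gt k m with h | h
  · rw [bq_eq_div (by omega : k ≤ m + 1), bq_eq_div h]
    have e1 : m + 1 - k = (m - k) + 1 := by omega
    rw [qPochq_succ m, e1, qPochq_succ (m - k), ← e1]
    have p1 := qPoch_q_ne_zero hq k
    have p2 := qPoch_q_ne_zero hq (m - k)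
    have n1 : (1 : ℂ) - q ^ (m + 1 - k) ≠ 0 := by
      have := one_sub_qpow_ne hq (m - k); rwa [← e1] at this
    field_simp
  · rcases le_or_gt k (m+1) with h2 | h2
    · have hk : k = m + 1 := by omega
      subst hk
      rw [Nat.sub_self, pow_zero, sub_self, zero_mul, bq_of_gt (by omega), mul_zero]
    · rw [bq_of_gt h2, bq_of_gt (by omega), mul_zero, mul_zero]
end basics
-- continuation: e, Gauss expansion
section two
set_option linter.unusedSectionVars false
variable {q x y : ℂ} (hq : ‖q‖ < 1)

lemma eq2_zero : eq2 q 0 = 1 := by simp [eq2]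

lemma eq2_succ (j : ℕ) : eq2 q (j+1) = eq2 q j * q ^ j := by
  rw [eq2, eq2, ← pow_add]
  congr 1
  have h1 : (j+1) * (j + 1 - 1) / 2 = (j+1).choose 2 := (Nat.choose_two_right (j+1)).symm
  have h2 : j * (j-1) / 2 = j.choose 2 := (Nat.choose_two_right j).symm
  have h3 : (j+1).choose 2 = j.choose 1 + j.choose 2 := Nat.choose_succ_succ j 1
  rw [Nat.choose_one_right] at h3
  omega

include hq in
lemma cauchyP_expand (M : ℕ) :
    cauchyP q x y M = ∑ t ∈ Finset.range (M+1), bq q M t * eq2 q t * (-y) ^ t * x ^ (M - t) := by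
  induction M with
  | zero => simp [cauchyP, bq_zero hq, eq2_zero]
  | succ M ih =>
    have step : cauchyP q x y (M+1) = cauchyP q x y M * (x - q ^ M * y) := by
      simp [cauchyP, Finset.prod_range_succ]
    rw [step, ih]
    have expand : (∑ t ∈ Finset.range (M+1), bq q M t * eq2 q t * (-y) ^ t * x ^ (M - t)) * (x - q ^ M * y)
        = (∑ t ∈ Finset.range (M+1), bq q M t * eq2 q t * (-y) ^ t * x ^ (M - t) * x)
          + (∑ t ∈ Finset.range (M+1), bq q M t * eq2 q t * q ^ M * (-y) ^ (t+1) * x ^ (M - t)) := by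
      rw [Finset.sum_mul, ← Finset.sum_add_distrib]
      apply Finset.sum_congr rfl
      intro t _
      rw [pow_succ]
      ring
    rw [expand]
    rw [Finset.sum_range_succ' (fun t => bq q (M+1) t * eq2 q t * (-y) ^ t * x ^ (M + 1 - t)) (M+1)]
    have split : ∀ k ∈ Finset.range (M+1),
        bq q (M+1) (k+1) * eq2 q (k+1) * (-y) ^ (k+1) * x ^ (M + 1 - (k+1))
        = bq q M (k+1) * eq2 q (k+1) * (-y) ^ (k+1) * x ^ (M - k)
          + bq q M k * eq2 q k * q ^ M * (-y) ^ (k+1) * x ^ (M - k) := by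
      intro k hk
      rw [Finset.mem_range] at hk
      rw [bq_pascal hq, (by omega : M + 1 - (k+1) = M - k), eq2_succ]
      have hpow : q ^ (M - k) * q ^ k = q ^ M := by
        rw [← pow_add]; congr 1; omega
      linear_combination (bq q M k * eq2 q k * (-y) ^ (k+1) * x ^ (M - k)) * hpow
    rw [Finset.sum_congr rfl split, Finset.sum_add_distrib]
    have secondeq : (∑ k ∈ Finset.range (M+1), bq q M k * eq2 q k * q ^ M * (-y) ^ (k+1) * x ^ (M - k))
        = ∑ t ∈ Finset.range (M+1), bq q M t * eq2 q t * q ^ M * (-y) ^ (t+1) * x ^ (M - t) := rfl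
    have firsteq : (∑ t ∈ Finset.range (M+1), bq q M t * eq2 q t * (-y) ^ t * x ^ (M - t) * x)
        = (∑ k ∈ Finset.range (M+1), bq q M (k+1) * eq2 q (k+1) * (-y) ^ (k+1) * x ^ (M - k))
          + bq q (M+1) 0 * eq2 q 0 * (-y) ^ 0 * x ^ (M + 1 - 0) := by
      have tmp : ∀ t ∈ Finset.range (M+1),
          bq q M t * eq2 q t * (-y) ^ t * x ^ (M - t) * x
          = bq q M t * eq2 q t * (-y) ^ t * x ^ (M + 1 - t) := by
        intro t ht
        rw [Finset.mem_range] at ht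
        rw [(by omega : M + 1 - t = (M - t) + 1), pow_succ]
        ring
      rw [Finset.sum_congr rfl tmp,
        Finset.sum_range_succ' (fun t => bq q M t * eq2 q t * (-y) ^ t * x ^ (M + 1 - t)) M]
      rw [Finset.sum_range_succ (fun k => bq q M (k+1) * eq2 q (k+1) * (-y) ^ (k+1) * x ^ (M - k)) M]
      rw [bq_of_gt (by omega : M < M + 1), bq_zero hq, bq_zero hq]
      have : ∀ k ∈ Finset.range M,
          bq q M (k+1) * eq2 q (k+1) * (-y) ^ (k+1) * x ^ (M + 1 - (k+1))
          = bq q M (k+1) * eq2 q (k+1) * (-y) ^ (k+1) * x ^ (M - k) := by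
        intro k hk
        rw [(by omega : M + 1 - (k+1) = M - k)]
      rw [Finset.sum_congr rfl this]
      ring
    rw [firsteq]
    ring
end two
section three
set_option linter.unusedSectionVars false
variable {q x y : ℂ} (hq : ‖q‖ < 1)

lemma sum_bq_pad {N R : ℕ} (h : N < R) (f : ℕ → ℂ) :
    ∑ k ∈ Finset.range R, bq q N k * f k = ∑ k ∈ Finset.range (N+1), bq q N k * f k := by
  refine (Finset.sum_subset (Finset.range_subset_range.mpr h) ?_).symm
  intro k _ hk
  rw [Finset.mem_range] at hk
  rw [bq_of_gt (by omega), zero_mul]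

lemma hRS_eq (N : ℕ) : hRS q x N = ∑ k ∈ Finset.range (N+1), bq q N k * x ^ k := by
  apply Finset.sum_congr rfl
  intro k hk
  rw [Finset.mem_range] at hk
  rw [bq, if_pos (by omega : k ≤ N)]

lemma hRS2_eq (N : ℕ) : hRS2 q x y N = ∑ k ∈ Finset.range (N+1), bq q N k * cauchyP q x y k := by
  apply Finset.sum_congr rfl
  intro k hk
  rw [Finset.mem_range] at hk
  rw [bq, if_pos (by omega : k ≤ N)]

include hq in
lemma hRS_zero : hRS q x 0 = 1 := by
  rw [hRS_eq, Finset.sum_range_one, bq_zero hq, pow_zero, mul_one]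

include hq in
lemma gauss_one {u : ℕ} (hu : 1 ≤ u) :
    ∑ t ∈ Finset.range (u+1), bq q u t * eq2 q t * (-1 : ℂ) ^ t = 0 := by
  have h := cauchyP_expand (q := q) (x := (1:ℂ)) (y := (1:ℂ)) hq u
  have hz : cauchyP q 1 1 u = 0 := by
    apply Finset.prod_eq_zero (Finset.mem_range.mpr (by omega : 0 < u))
    simp
  rw [hz] at h
  have e : (∑ t ∈ Finset.range (u+1), bq q u t * eq2 q t * (-1 : ℂ) ^ t)
      = ∑ t ∈ Finset.range (u+1), bq q u t * eq2 q t * (-1 : ℂ) ^ t * 1 ^ (u - t) :=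
    Finset.sum_congr rfl (fun t _ => by simp)
  rw [e, ← h]

include hq in
lemma RSrecA (K : ℕ) :
    (1 + x) * hRS q x K = hRS q x (K+1) + (1 - q ^ K) * x * hRS q x (K-1) := by
  cases K with
  | zero =>
    rw [hRS_zero hq, pow_zero, sub_self, zero_mul, zero_mul, add_zero, mul_one]
    rw [hRS_eq]
    rw [Finset.sum_range_succ, Finset.sum_range_one, bq_zero hq, bq_self hq]
    ring
  | succ M =>
    have key : hRS q x (M+2)
        = hRS q x (M+1) + x * hRS q x (M+1) - (1 - q ^ (M+1)) * x * hRS q x M := by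
      rw [hRS_eq (M+2),
        Finset.sum_range_succ' (fun k => bq q (M+2) k * x ^ k) (M+2)]
      have e1 : ∀ k ∈ Finset.range (M+2),
          bq q (M+2) (k+1) * x ^ (k+1)
          = bq q (M+1) (k+1) * x ^ (k+1) + bq q (M+1) k * x ^ (k+1)
            - (1 - q ^ (M+1)) * (bq q M k * x ^ (k+1)) := by
        intro k hk
        rw [bq_pascal hq (M+1) k]
        have hs := bq_shift hq M k
        have : q ^ (M + 1 - k) * bq q (M+1) k = bq q (M+1) k - (1 - q ^ (M+1)) * bq q M k := by
          linear_combination -hs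
        rw [this]
        ring
      rw [Finset.sum_congr rfl e1]
      rw [Finset.sum_sub_distrib, Finset.sum_add_distrib]
      have p1 : (∑ k ∈ Finset.range (M+2), bq q (M+1) (k+1) * x ^ (k+1)) + bq q (M+2) 0 * x ^ 0
          = hRS q x (M+1) := by
        rw [Finset.sum_range_succ (fun k => bq q (M+1) (k+1) * x ^ (k+1)) (M+1),
          bq_of_gt (by omega : M + 1 < M + 2), zero_mul, add_zero]
        rw [hRS_eq (M+1), Finset.sum_range_succ' (fun k => bq q (M+1) k * x ^ k) (M+1)]
        rw [bq_zero hq, bq_zero hq]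
      have p2 : (∑ k ∈ Finset.range (M+2), bq q (M+1) k * x ^ (k+1)) = x * hRS q x (M+1) := by
        rw [hRS_eq (M+1), Finset.mul_sum]
        apply Finset.sum_congr rfl
        intro k _
        ring
      have p3 : (∑ k ∈ Finset.range (M+2), (1 - q ^ (M+1)) * (bq q M k * x ^ (k+1)))
          = (1 - q ^ (M+1)) * x * hRS q x M := by
        rw [← Finset.mul_sum, sum_bq_pad (by omega) (fun k => x ^ (k+1)), hRS_eq M,
          Finset.mul_sum, Finset.mul_sum]
        apply Finset.sum_congr rfl
        intro k _
        ring
      rw [p2, p3, ← p1]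
      ring
    rw [(by omega : M + 1 - 1 = M), key]
    ring
end three
section four
set_option linter.unusedSectionVars false
variable {q x y : ℂ} (hq : ‖q‖ < 1)

include hq in
lemma hRS2_expand (N : ℕ) :
    hRS2 q x y N
      = ∑ j ∈ Finset.range (N+1), bq q N j * eq2 q j * (-y) ^ j * hRS q x (N - j) := by
  rw [hRS2_eq]
  have step1 : ∀ k ∈ Finset.range (N+1),
      bq q N k * cauchyP q x y k
      = ∑ j ∈ Finset.range (N+1), bq q N k * (bq q k j * eq2 q j * (-y) ^ j * x ^ (k - j)) := by
    intro k hk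
    rw [Finset.mem_range] at hk
    rw [cauchyP_expand hq k]
    rw [show (∑ t ∈ Finset.range (k+1), bq q k t * eq2 q t * (-y) ^ t * x ^ (k - t))
        = ∑ t ∈ Finset.range (k+1), bq q k t * (eq2 q t * (-y) ^ t * x ^ (k - t)) from
      Finset.sum_congr rfl (fun t _ => by ring)]
    rw [← sum_bq_pad (q := q) (by omega : k < N+1) (fun j => eq2 q j * (-y) ^ j * x ^ (k - j))]
    rw [Finset.mul_sum]
    exact Finset.sum_congr rfl (fun j _ => by ring)
  rw [Finset.sum_congr rfl step1, Finset.sum_comm]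
  apply Finset.sum_congr rfl
  intro j hj
  rw [Finset.mem_range] at hj
  have vanish : ∀ k ∈ Finset.range (N+1), k ∉ Finset.Ico j (N+1) →
      bq q N k * (bq q k j * eq2 q j * (-y) ^ j * x ^ (k - j)) = 0 := by
    intro k hk hk2
    rw [Finset.mem_range] at hk
    rw [Finset.mem_Ico] at hk2
    have : k < j := by omega
    rw [bq_of_gt this]
    ring
  rw [← Finset.sum_subset (by
      intro k hk
      rw [Finset.mem_Ico] at hk
      rw [Finset.mem_range]
      omega) vanish]
  rw [Finset.sum_Ico_eq_sum_range]
  have per : ∀ i ∈ Finset.range (N+1-j),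
      bq q N (j+i) * (bq q (j+i) j * eq2 q j * (-y) ^ j * x ^ (j+i-j))
      = (bq q N j * eq2 q j * (-y) ^ j) * (bq q (N-j) i * x ^ i) := by
    intro i _
    have tri := bq_tri hq N j i
    rw [(by omega : j + i - j = i)]
    linear_combination (eq2 q j * (-y) ^ j * x ^ i) * tri.symm
  rw [Finset.sum_congr rfl per, ← Finset.mul_sum]
  rw [(by omega : N + 1 - j = (N - j) + 1), ← hRS_eq]
end four
section five
set_option linter.unusedSectionVars false
variable {q x : ℂ} (hq : ‖q‖ < 1)

include hq in
lemma bq_absorb {n k : ℕ} (h : k + 1 ≤ n) :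
    bq q n (k+1) * (1 - q ^ (k+1)) = bq q n k * (1 - q ^ (n - k)) := by
  obtain ⟨s, rfl⟩ : ∃ s, n = k + 1 + s := ⟨n - (k+1), by omega⟩
  rw [bq_eq_div (by omega : k + 1 ≤ k + 1 + s), bq_eq_div (by omega : k ≤ k + 1 + s),
    (by omega : k + 1 + s - (k+1) = s), (by omega : k + 1 + s - k = s + 1)]
  rw [qPochq_succ s, qPochq_succ k]
  have p0 := qPoch_q_ne_zero hq k
  have p1 := qPoch_q_ne_zero hq s
  have n1 := one_sub_qpow_ne hq k
  have n2 := one_sub_qpow_ne hq s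
  field_simp

set_option maxHeartbeats 1000000 in
include hq in
lemma IDC (n m r : ℕ) :
    bq q n (r+1) * bq q (m+2) (r+1) * qPoch q q (r+1)
    = bq q n (r+1) * bq q (m+1) (r+1) * qPoch q q (r+1)
      + bq q n r * bq q (m+1) r * qPoch q q r * (1 - q ^ (n+m+1-2*r))
      - (1 - q ^ (m+1)) * (bq q n r * bq q m r * qPoch q q r) := by
  rcases lt_or_ge n r with hnr | hnr
  · -- r > n : everything with bq n vanishes
    rw [bq_of_gt (by omega : n < r+1), bq_of_gt hnr]
    ring
  rcases eq_or_lt_of_le hnr with rfl | hrn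
  · -- r = n
    rw [bq_of_gt (by omega : r < r + 1), bq_self hq]
    rcases le_or_gt r (m+1) with h1 | h1
    · rw [(by omega : r + m + 1 - 2*r = m + 1 - r)]
      have := bq_shift hq m r
      linear_combination -(qPoch q q r) * this
    · rw [bq_of_gt h1, bq_of_gt (by omega : m < r)]
      ring
  -- now r + 1 ≤ n
  rcases lt_or_ge (m+1) r with hmr | hmr
  · -- r ≥ m+2
    rw [bq_of_gt (by omega : m + 2 < r + 1), bq_of_gt (by omega : m + 1 < r + 1),
      bq_of_gt (by omega : m + 1 < r), bq_of_gt (by omega : m < r)]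
    ring
  rcases eq_or_lt_of_le hmr with rfl | hmr'
  · -- r = m+1, r+1 ≤ n so m+2 ≤ n
    rw [bq_of_gt (by omega : m + 1 < m + 1 + 1), bq_of_gt (by omega : m < m + 1),
      bq_self hq, bq_self hq]
    obtain ⟨s, rfl⟩ : ∃ s, n = m + 2 + s := ⟨n - (m+2), by omega⟩
    rw [bq_eq_div (by omega : m + 1 + 1 ≤ m + 2 + s), bq_eq_div (by omega : m + 1 ≤ m + 2 + s),
      (by omega : m + 2 + s - (m + 1 + 1) = s), (by omega : m + 2 + s - (m+1) = s + 1),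
      (by omega : m + 2 + s + m + 1 - 2 * (m+1) = s + 1)]
    rw [qPochq_succ s, qPochq_succ (m+1)]
    have p1 := qPoch_q_ne_zero hq s
    have p2 := qPoch_q_ne_zero hq (m+1)
    have p3 := qPoch_q_ne_zero hq (m+2+s)
    have n1 := one_sub_qpow_ne hq s
    have n2 := one_sub_qpow_ne hq (m+1)
    field_simp
    ring
  · -- generic : r + 1 ≤ n, r + 1 ≤ m + 1
    obtain ⟨s, rfl⟩ : ∃ s, n = r + 1 + s := ⟨n - (r+1), by omega⟩
    obtain ⟨w, rfl⟩ : ∃ w, m = r + w := ⟨m - r, by omega⟩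
    rw [(by omega : r + 1 + s + (r + w) + 1 - 2 * r = s + w + 2)]
    have h1 := bq_absorb hq (by omega : r + 1 ≤ r + 1 + s)
    rw [(by omega : r + 1 + s - r = s + 1)] at h1
    have h2 := bq_absorb hq (by omega : r + 1 ≤ r + w + 2)
    rw [(by omega : r + w + 2 - r = w + 2)] at h2
    have h5 := bq_absorb hq (by omega : r + 1 ≤ r + w + 1)
    rw [(by omega : r + w + 1 - r = w + 1)] at h5
    have h3 := bq_shift hq (r + w + 1) r
    rw [(by omega : r + w + 1 + 1 - r = w + 2), (by omega : r + w + 1 + 1 = r + w + 2)] at h3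
    have h4 := bq_shift hq (r + w) r
    rw [(by omega : r + w + 1 - r = w + 1)] at h4
    have h6 := qPochq_succ (q := q) r
    have key : (1 - q ^ (r+w+2)) * (1 - q ^ (s+1))
        = (1 - q ^ (s+1)) * (1 - q ^ (w+1)) + (1 - q ^ (s+w+2)) * (1 - q ^ (r+1))
          - (1 - q ^ (r+1)) * (1 - q ^ (w+1)) := by
      rw [(by rw [pow_add, pow_add] : q ^ (r+w+2) = q ^ r * q ^ w * q ^ 2),
        (by rw [pow_add, pow_add] : q ^ (s+w+2) = q ^ s * q ^ w * q ^ 2),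
        pow_succ, pow_succ, pow_succ]
      ring
    set α : ℂ := 1 - q ^ (r+1) with hα
    set bn1 := bq q (r+1+s) (r+1)
    set b21 := bq q (r+w+2) (r+1)
    set b11 := bq q (r+w+1) (r+1)
    set bnr := bq q (r+1+s) r
    set b2r := bq q (r+w+2) r
    set b1r := bq q (r+w+1) r
    set bmr := bq q (r+w) r
    set P := qPoch q q (r+1)
    set cr := qPoch q q r
    set S : ℂ := 1 - q ^ (s+1)
    set W : ℂ := 1 - q ^ (w+1)
    have hane : α ≠ 0 := one_sub_qpow_ne hq r
    apply mul_right_cancel₀ (pow_ne_zero 2 hane)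
    have L1 : bn1 * b21 * P * α^2 = bnr * b1r * P * (S * (1 - q ^ (r+w+2))) := by
      linear_combination (b21*α*P)*h1 + (bnr*S*P)*h2 + (bnr*S*P)*h3
    have R1 : bn1 * b11 * P * α^2 = bnr * b1r * P * (S * W) := by
      linear_combination (b11*α*P)*h1 + (bnr*S*P)*h5
    have R3 : (1 - q ^ (r+w+1)) * (bnr * bmr * cr) * α^2 = bnr * b1r * P * (W * α) := by
      linear_combination (-(bnr*cr*α^2))*h4 - (bnr*b1r*W*α)*h6
    linear_combination L1 - R1 + R3 + (bnr*b1r*(1 - q^(s+w+2))*α)*h6 + (bnr*b1r*P)*key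
end five
section six
set_option linter.unusedSectionVars false
variable {q x : ℂ} (hq : ‖q‖ < 1)

include hq in
lemma bq_one_poch (n : ℕ) : bq q n 1 * qPoch q q 1 = 1 - q ^ n := by
  cases n with
  | zero => rw [bq_of_gt (by omega), pow_zero, sub_self, zero_mul]
  | succ k =>
    rw [bq_eq_div (by omega : 1 ≤ k + 1), (by omega : k + 1 - 1 = k), qPochq_succ k]
    have p1 := qPoch_q_ne_zero hq k
    have p2 := qPoch_q_ne_zero hq 1
    field_simp

include hq in
lemma HB (n : ℕ) : ∀ m : ℕ, hRS q x n * hRS q x m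
    = ∑ r ∈ Finset.range (m+1),
        bq q n r * bq q m r * qPoch q q r * x ^ r * hRS q x (n + m - 2*r) := by
  intro m
  induction m using Nat.twoStepInduction with
  | zero =>
    rw [Finset.sum_range_one, hRS_zero hq, bq_zero hq, bq_zero hq, qPoch_zero]
    simp
  | one =>
    rw [Finset.sum_range_succ, Finset.sum_range_one]
    rw [bq_zero hq, bq_zero hq, bq_self hq, qPoch_zero]
    have h1 : hRS q x 1 = 1 + x := by
      rw [hRS_eq, Finset.sum_range_succ, Finset.sum_range_one, bq_zero hq, bq_self hq]
      ring
    have hrec := RSrecA hq (x := x) n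
    rw [(by omega : n + 1 - 2*1 = n - 1), (by omega : n + 1 - 2*0 = n + 1)]
    rw [h1]
    have hb1 := bq_one_poch hq (q := q) n
    linear_combination hrec - (x * hRS q x (n-1)) * hb1
  | more m ih0 ih1 =>
    have hrec := RSrecA hq (x := x) (m+1)
    rw [(by omega : m + 1 - 1 = m)] at hrec
    have step1 : hRS q x n * hRS q x (m+2)
        = (1+x) * (hRS q x n * hRS q x (m+1)) - (1 - q^(m+1)) * x * (hRS q x n * hRS q x m) := by
      linear_combination (-(hRS q x n)) * hrec
    rw [step1, ih0, ih1]
    -- termwise expansion of (1+x) * Σ1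
    have expand1 : (1+x) * (∑ r ∈ Finset.range (m+1+1),
          bq q n r * bq q (m+1) r * qPoch q q r * x ^ r * hRS q x (n + (m+1) - 2*r))
        = (∑ r ∈ Finset.range (m+2),
            bq q n r * bq q (m+1) r * qPoch q q r * x ^ r * hRS q x (n + m + 2 - 2*r))
          + (∑ r ∈ Finset.range (m+2),
            bq q n r * bq q (m+1) r * qPoch q q r * (1 - q ^ (n + m + 1 - 2*r)) * x ^ (r+1)
              * hRS q x (n + m - 2*r)) := by
      rw [Finset.mul_sum, ← Finset.sum_add_distrib]
      apply Finset.sum_congr rfl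
      intro r hr
      rw [Finset.mem_range] at hr
      rcases le_or_gt r n with hn | hn
      · have hm : r ≤ m + 1 := by omega
        have hK := RSrecA hq (x := x) (n + m + 1 - 2*r)
        rw [(by omega : n + (m+1) - 2*r = n + m + 1 - 2*r)]
        by_cases h2 : 2*r ≤ n + m
        · rw [(by omega : n + m + 1 - 2*r + 1 = n + m + 2 - 2*r),
            (by omega : n + m + 1 - 2*r - 1 = n + m - 2*r)] at hK
          linear_combination (bq q n r * bq q (m+1) r * qPoch q q r * x ^ r) * hK
        · have e0 : n + m + 1 - 2*r = 0 := by omega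
          rw [e0] at hK ⊢
          rw [(by omega : n + m + 2 - 2*r = 1), (by omega : n + m - 2*r = 0)] at *
          rw [pow_zero] at hK ⊢
          linear_combination (bq q n r * bq q (m+1) r * qPoch q q r * x ^ r) * hK
      · rw [bq_of_gt hn]
        ring
    rw [expand1]
    -- Σ0 part
    have expand0 : (1 - q^(m+1)) * x * (∑ r ∈ Finset.range (m+1),
          bq q n r * bq q m r * qPoch q q r * x ^ r * hRS q x (n + m - 2*r))
        = ∑ r ∈ Finset.range (m+2),
            (1 - q^(m+1)) * (bq q n r * bq q m r * qPoch q q r * x ^ (r+1) * hRS q x (n + m - 2*r)) := by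
      rw [Finset.sum_range_succ (fun r => (1 - q^(m+1)) * (bq q n r * bq q m r * qPoch q q r
          * x ^ (r+1) * hRS q x (n + m - 2*r))) (m+1)]
      rw [bq_of_gt (by omega : m < m + 1)]
      rw [Finset.mul_sum]
      have : ∀ r ∈ Finset.range (m+1),
          (1 - q^(m+1)) * x * (bq q n r * bq q m r * qPoch q q r * x ^ r * hRS q x (n + m - 2*r))
          = (1 - q^(m+1)) * (bq q n r * bq q m r * qPoch q q r * x ^ (r+1) * hRS q x (n + m - 2*r)) := by
        intro r _
        rw [pow_succ]
        ring
      rw [Finset.sum_congr rfl this]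
      ring
    rw [expand0]
    -- Target side
    rw [Finset.sum_range_succ' (fun r => bq q n r * bq q (m+2) r * qPoch q q r * x ^ r
        * hRS q x (n + (m+2) - 2*r)) (m+2)]
    have sa : (∑ r ∈ Finset.range (m+2),
          bq q n r * bq q (m+1) r * qPoch q q r * x ^ r * hRS q x (n + m + 2 - 2*r))
        = (∑ r ∈ Finset.range (m+2),
            bq q n (r+1) * bq q (m+1) (r+1) * qPoch q q (r+1) * x ^ (r+1) * hRS q x (n + m - 2*r))
          + hRS q x (n + m + 2) := by
      rw [Finset.sum_range_succ' (fun r => bq q n r * bq q (m+1) r * qPoch q q r * x ^ r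
          * hRS q x (n + m + 2 - 2*r)) (m+1)]
      rw [Finset.sum_range_succ (fun r => bq q n (r+1) * bq q (m+1) (r+1) * qPoch q q (r+1)
          * x ^ (r+1) * hRS q x (n + m - 2*r)) (m+1)]
      rw [bq_of_gt (by omega : m + 1 < m + 2), bq_zero hq, bq_zero hq, qPoch_zero]
      have : ∀ r ∈ Finset.range (m+1),
          bq q n (r+1) * bq q (m+1) (r+1) * qPoch q q (r+1) * x ^ (r+1) * hRS q x (n + m + 2 - 2*(r+1))
          = bq q n (r+1) * bq q (m+1) (r+1) * qPoch q q (r+1) * x ^ (r+1) * hRS q x (n + m - 2*r) := by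
        intro r _
        rw [(by omega : n + m + 2 - 2*(r+1) = n + m - 2*r)]
      rw [Finset.sum_congr rfl this]
      simp
    rw [sa]
    have tgt : ∀ r ∈ Finset.range (m+2),
        bq q n (r+1) * bq q (m+2) (r+1) * qPoch q q (r+1) * x ^ (r+1) * hRS q x (n + (m+2) - 2*(r+1))
        = bq q n (r+1) * bq q (m+1) (r+1) * qPoch q q (r+1) * x ^ (r+1) * hRS q x (n + m - 2*r)
          + bq q n r * bq q (m+1) r * qPoch q q r * (1 - q ^ (n + m + 1 - 2*r)) * x ^ (r+1)
              * hRS q x (n + m - 2*r)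
          - (1 - q^(m+1)) * (bq q n r * bq q m r * qPoch q q r * x ^ (r+1) * hRS q x (n + m - 2*r)) := by
      intro r _
      rw [(by omega : n + (m+2) - 2*(r+1) = n + m - 2*r)]
      have hidc := IDC hq n m r
      linear_combination (x ^ (r+1) * hRS q x (n + m - 2*r)) * hidc
    rw [Finset.sum_congr rfl tgt]
    rw [Finset.sum_sub_distrib, Finset.sum_add_distrib]
    have f0 : bq q n 0 * bq q (m+2) 0 * qPoch q q 0 * x ^ 0 * hRS q x (n + (m+2) - 2*0)
        = hRS q x (n + m + 2) := by
      rw [bq_zero hq, bq_zero hq, qPoch_zero, pow_zero,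
        (by omega : n + (m+2) - 2*0 = n + m + 2)]
      ring
    rw [f0]
    ring
end six
section seven

lemma tri_swap (F : ℕ → ℕ → ℂ) : ∀ T : ℕ,
    ∑ t ∈ Finset.range T, ∑ r ∈ Finset.range (T - t), F t r
    = ∑ u ∈ Finset.range T, ∑ t ∈ Finset.range (u+1), F t (u - t) := by
  intro T
  induction T with
  | zero => simp
  | succ T ih =>
    rw [Finset.sum_range_succ (fun t => ∑ r ∈ Finset.range (T + 1 - t), F t r) T]
    have inner : ∀ t ∈ Finset.range T,
        (∑ r ∈ Finset.range (T + 1 - t), F t r)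
        = (∑ r ∈ Finset.range (T - t), F t r) + F t (T - t) := by
      intro t ht
      rw [Finset.mem_range] at ht
      rw [(by omega : T + 1 - t = (T - t) + 1), Finset.sum_range_succ]
    rw [Finset.sum_congr rfl inner, Finset.sum_add_distrib, ih]
    rw [Finset.sum_range_succ (fun u => ∑ t ∈ Finset.range (u+1), F t (u - t)) T]
    rw [Finset.sum_range_succ (fun t => F t (T - t)) T]
    rw [(by omega : T + 1 - T = 1), Finset.sum_range_one, Nat.sub_self]
    ring

lemma rect_to_tri (F : ℕ → ℕ → ℂ) (T R : ℕ) (hTR : T ≤ R)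
    (hF : ∀ t r : ℕ, T ≤ t + r → F t r = 0) :
    ∑ t ∈ Finset.range T, ∑ r ∈ Finset.range R, F t r
    = ∑ u ∈ Finset.range T, ∑ t ∈ Finset.range (u+1), F t (u - t) := by
  rw [← tri_swap]
  apply Finset.sum_congr rfl
  intro t ht
  rw [Finset.mem_range] at ht
  refine (Finset.sum_subset (Finset.range_subset_range.mpr (by omega : T - t ≤ R)) ?_).symm
  intro r _ hr
  rw [Finset.mem_range] at hr
  exact hF t r (by omega)

end seven
noncomputable def WAux (q x y : ℂ) (n m a b u : ℕ) : ℂ :=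
  qPoch q q u * (bq q n u * bq q m u) * (bq q (n-u) a * bq q (m-u) b) * x^u
    * (eq2 q a * eq2 q b) * ((-y)^a * (-y)^b) * hRS q x (n + m - 2*u - a - b)

noncomputable def PhiAux (q x y : ℂ) (n m t a b r : ℕ) : ℂ :=
  bq q (t+r) t * eq2 q t * (-1)^t * WAux q x y n m a b (t+r)

section main
set_option linter.unusedSectionVars false
variable {q x y : ℂ} (hq : ‖q‖ < 1)

lemma qb {N k : ℕ} (h : k ≤ N) : qBinom q N k = bq q N k := by rw [bq, if_pos h]

include hq in
lemma step_EPhi (n m : ℕ) (t a b r : ℕ) (htn : t ≤ n) (htm : t ≤ m) :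
    bq q n t * bq q m t * qPoch q q t * eq2 q t * (-x)^t
      * (bq q (n-t) a * eq2 q a * (-y)^a) * (bq q (m-t) b * eq2 q b * (-y)^b)
      * (bq q (n-t-a) r * bq q (m-t-b) r * qPoch q q r * x^r
          * hRS q x (n - t - a + (m - t - b) - 2*r))
    = PhiAux q x y n m t a b r := by
  rw [PhiAux, WAux]
  by_cases h1 : t + a ≤ n
  · by_cases h2 : t + b ≤ m
    · by_cases h3 : t + a + r ≤ n
      · by_cases h4 : t + b + r ≤ m
        · -- main case
          have A1 : bq q (n-t) a * bq q (n-t-a) r = bq q (n-t) r * bq q (n-(t+r)) a := by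
            have u1 := bq_tri hq (n-t) a r
            have u2 := bq_tri hq (n-t) r a
            have u3 := bq_symm_aux hq a r
            rw [(by omega : r + a = a + r)] at u2
            rw [(by omega : n - (t+r) = n - t - r)]
            rw [u1, u3, ← u2]
          have B1 : bq q (m-t) b * bq q (m-t-b) r = bq q (m-t) r * bq q (m-(t+r)) b := by
            have u1 := bq_tri hq (m-t) b r
            have u2 := bq_tri hq (m-t) r b
            have u3 := bq_symm_aux hq b r
            rw [(by omega : r + b = b + r)] at u2
            rw [(by omega : m - (t+r) = m - t - r)]
            rw [u1, u3, ← u2]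
          have C1n := bq_tri hq n t r
          have C1m := bq_tri hq m t r
          have D1 : bq q (t+r) t * (qPoch q q t * qPoch q q r) = qPoch q q (t+r) := by
            have h5 := bq_mul_poch hq (show t ≤ t + r by omega)
            rwa [(by omega : t + r - t = r)] at h5
          rw [(by omega : n - t - a + (m - t - b) - 2*r = n + m - 2*(t+r) - a - b)]
          set P := hRS q x (n + m - 2*(t+r) - a - b)
          linear_combination
            (bq q n t * bq q m t * qPoch q q t * eq2 q t * (-x)^t * eq2 q a * (-y)^a
              * (bq q (m-t) b * eq2 q b * (-y)^b) * bq q (m-t-b) r * qPoch q q r * x^r * P) * A1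
            + (bq q n t * bq q m t * qPoch q q t * eq2 q t * (-x)^t * eq2 q a * (-y)^a
              * eq2 q b * (-y)^b * qPoch q q r * x^r * P * bq q (n-t) r * bq q (n-(t+r)) a) * B1
            + (bq q m t * qPoch q q t * eq2 q t * (-x)^t * eq2 q a * (-y)^a * eq2 q b * (-y)^b
              * qPoch q q r * x^r * P * bq q (n-(t+r)) a * bq q (m-t) r * bq q (m-(t+r)) b) * C1n
            + (qPoch q q t * eq2 q t * (-x)^t * eq2 q a * (-y)^a * eq2 q b * (-y)^b
              * qPoch q q r * x^r * P * bq q (n-(t+r)) a * bq q (m-(t+r)) b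
              * bq q n (t+r) * bq q (t+r) t) * C1m
            + (eq2 q t * (-x)^t * eq2 q a * (-y)^a * eq2 q b * (-y)^b * x^r * P
              * bq q (n-(t+r)) a * bq q (m-(t+r)) b * bq q n (t+r) * bq q m (t+r)
              * bq q (t+r) t) * D1
        · rw [bq_of_gt (show m - t - b < r by omega)]
          rcases le_or_gt (t+r) m with h5 | h5
          · rw [bq_of_gt (show m - (t+r) < b by omega)]; ring
          · rw [bq_of_gt (show m < t + r from h5)]; ring
      · rw [bq_of_gt (show n - t - a < r by omega)]
        rcases le_or_gt (t+r) n with h5 | h5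
        · rw [bq_of_gt (show n - (t+r) < a by omega)]; ring
        · rw [bq_of_gt (show n < t + r from h5)]; ring
    · rw [bq_of_gt (show m - t < b by omega)]
      rcases le_or_gt (t+r) m with h5 | h5
      · rw [bq_of_gt (show m - (t+r) < b by omega)]; ring
      · rw [bq_of_gt (show m < t + r from h5)]; ring
  · rw [bq_of_gt (show n - t < a by omega)]
    rcases le_or_gt (t+r) n with h5 | h5
    · rw [bq_of_gt (show n - (t+r) < a by omega)]; ring
    · rw [bq_of_gt (show n < t + r from h5)]; ring
end main
section final
set_option linter.unusedSectionVars false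
variable {q x y : ℂ}

/-- Mixed Askey–Ismail type identity. -/
theorem mixed_askey_ismail (q x y : ℂ) (hq : ‖q‖ < 1) (n m : ℕ) :
    ∑ j ∈ Finset.range (n + 1), ∑ k ∈ Finset.range (m + 1),
      qBinom q n j * qBinom q m k * q ^ (j * (j - 1) / 2 + k * (k - 1) / 2) *
        (-y) ^ (j + k) * hRS q x (n + m - j - k) =
    ∑ k ∈ Finset.range (min n m + 1),
      qBinom q n k * qBinom q m k * qPoch q q k * q ^ (k * (k - 1) / 2) * (-x) ^ k *
        hRS2 q x y (n - k) * hRS2 q x y (m - k) := by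
  symm
  set μ := min n m with hμ
  calc
    ∑ t ∈ Finset.range (μ + 1),
        qBinom q n t * qBinom q m t * qPoch q q t * q ^ (t * (t - 1) / 2) * (-x) ^ t *
          hRS2 q x y (n - t) * hRS2 q x y (m - t)
      = ∑ t ∈ Finset.range (μ + 1), ∑ a ∈ Finset.range (n+1), ∑ b ∈ Finset.range (m+1),
          (bq q n t * bq q m t * qPoch q q t * eq2 q t * (-x)^t
            * (bq q (n-t) a * eq2 q a * (-y)^a) * (bq q (m-t) b * eq2 q b * (-y)^b)
            * (hRS q x (n-t-a) * hRS q x (m-t-b))) := by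
        apply Finset.sum_congr rfl
        intro t ht
        rw [Finset.mem_range] at ht
        have htn : t ≤ n := by omega
        have htm : t ≤ m := by omega
        have pad1 : hRS2 q x y (n-t)
            = ∑ a ∈ Finset.range (n+1), bq q (n-t) a * (eq2 q a * ((-y)^a * hRS q x (n-t-a))) := by
          rw [hRS2_expand hq (n-t)]
          rw [show (∑ j ∈ Finset.range (n-t+1),
              bq q (n-t) j * eq2 q j * (-y)^j * hRS q x (n-t-j))
              = ∑ j ∈ Finset.range (n-t+1),
                bq q (n-t) j * (eq2 q j * ((-y)^j * hRS q x (n-t-j))) from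
            Finset.sum_congr rfl (fun j _ => by ring)]
          exact (sum_bq_pad (q := q) (by omega : n - t < n + 1)
            (fun a => eq2 q a * ((-y)^a * hRS q x (n-t-a)))).symm
        have pad2 : hRS2 q x y (m-t)
            = ∑ b ∈ Finset.range (m+1), bq q (m-t) b * (eq2 q b * ((-y)^b * hRS q x (m-t-b))) := by
          rw [hRS2_expand hq (m-t)]
          rw [show (∑ j ∈ Finset.range (m-t+1),
              bq q (m-t) j * eq2 q j * (-y)^j * hRS q x (m-t-j))
              = ∑ j ∈ Finset.range (m-t+1),
                bq q (m-t) j * (eq2 q j * ((-y)^j * hRS q x (m-t-j))) from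
            Finset.sum_congr rfl (fun j _ => by ring)]
          exact (sum_bq_pad (q := q) (by omega : m - t < m + 1)
            (fun b => eq2 q b * ((-y)^b * hRS q x (m-t-b)))).symm
        rw [qb htn, qb htm, pad1, pad2,
          (show q ^ (t * (t - 1) / 2) = eq2 q t from rfl)]
        rw [mul_assoc, Finset.sum_mul_sum, Finset.mul_sum]
        apply Finset.sum_congr rfl
        intro a _
        rw [Finset.mul_sum]
        apply Finset.sum_congr rfl
        intro b _
        ring
    _ = ∑ t ∈ Finset.range (μ + 1), ∑ a ∈ Finset.range (n+1), ∑ b ∈ Finset.range (m+1),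
          ∑ r ∈ Finset.range (m+1), PhiAux q x y n m t a b r := by
        apply Finset.sum_congr rfl
        intro t ht
        rw [Finset.mem_range] at ht
        have htn : t ≤ n := by omega
        have htm : t ≤ m := by omega
        apply Finset.sum_congr rfl
        intro a _
        apply Finset.sum_congr rfl
        intro b _
        rw [HB hq (x := x) (n-t-a) (m-t-b)]
        have pad3 : (∑ r ∈ Finset.range ((m-t-b)+1),
              bq q (n-t-a) r * bq q (m-t-b) r * qPoch q q r * x ^ r
                * hRS q x (n-t-a + (m-t-b) - 2*r))
            = ∑ r ∈ Finset.range (m+1), bq q (m-t-b) r * (bq q (n-t-a) r * (qPoch q q r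
                * (x ^ r * hRS q x (n-t-a + (m-t-b) - 2*r)))) := by
          rw [show (∑ r ∈ Finset.range ((m-t-b)+1),
              bq q (n-t-a) r * bq q (m-t-b) r * qPoch q q r * x ^ r
                * hRS q x (n-t-a + (m-t-b) - 2*r))
              = ∑ r ∈ Finset.range ((m-t-b)+1),
                bq q (m-t-b) r * (bq q (n-t-a) r * (qPoch q q r
                  * (x ^ r * hRS q x (n-t-a + (m-t-b) - 2*r)))) from
            Finset.sum_congr rfl (fun r _ => by ring)]
          exact (sum_bq_pad (q := q) (by omega : m - t - b < m + 1)
            (fun r => bq q (n-t-a) r * (qPoch q q r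
              * (x ^ r * hRS q x (n-t-a + (m-t-b) - 2*r))))).symm
        rw [pad3, Finset.mul_sum]
        apply Finset.sum_congr rfl
        intro r _
        rw [← step_EPhi hq n m t a b r htn htm]
        ring
    _ = ∑ a ∈ Finset.range (n+1), ∑ b ∈ Finset.range (m+1),
          ∑ t ∈ Finset.range (μ + 1), ∑ r ∈ Finset.range (m+1), PhiAux q x y n m t a b r := by
        rw [Finset.sum_comm]
        apply Finset.sum_congr rfl
        intro a _
        rw [Finset.sum_comm]
    _ = ∑ a ∈ Finset.range (n+1), ∑ b ∈ Finset.range (m+1),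
          bq q n a * bq q m b * (eq2 q a * eq2 q b) * ((-y)^a * (-y)^b)
            * hRS q x (n + m - a - b) := by
        apply Finset.sum_congr rfl
        intro a _
        apply Finset.sum_congr rfl
        intro b _
        rw [rect_to_tri (fun t r => PhiAux q x y n m t a b r) (μ+1) (m+1)
          (by omega : μ + 1 ≤ m + 1)
          (by
            intro t r htr
            simp only [PhiAux, WAux]
            rcases (show n < t + r ∨ m < t + r by omega) with h | h
            · rw [bq_of_gt h]; ring
            · rw [bq_of_gt h]; ring)]
        have inner : ∀ u ∈ Finset.range (μ+1),
            (∑ t ∈ Finset.range (u+1), PhiAux q x y n m t a b (u - t))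
            = (∑ t ∈ Finset.range (u+1), bq q u t * eq2 q t * (-1:ℂ)^t)
                * WAux q x y n m a b u := by
          intro u _
          rw [Finset.sum_mul]
          apply Finset.sum_congr rfl
          intro t ht
          rw [Finset.mem_range] at ht
          simp only [PhiAux]
          rw [(by omega : t + (u - t) = u)]
        rw [Finset.sum_congr rfl inner]
        rw [Finset.sum_eq_single_of_mem 0 (Finset.mem_range.mpr (by omega))
          (by
            intro u _ hu
            rw [gauss_one hq (by omega : 1 ≤ u), zero_mul])]
        rw [Finset.sum_range_one, bq_zero hq, eq2_zero, pow_zero]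
        simp only [WAux]
        rw [bq_zero hq, bq_zero hq, Nat.sub_zero, Nat.sub_zero, qPoch_zero, pow_zero,
          (by omega : n + m - 2*0 - a - b = n + m - a - b)]
        ring
    _ = ∑ j ∈ Finset.range (n + 1), ∑ k ∈ Finset.range (m + 1),
          qBinom q n j * qBinom q m k * q ^ (j * (j - 1) / 2 + k * (k - 1) / 2) *
            (-y) ^ (j + k) * hRS q x (n + m - j - k) := by
        apply Finset.sum_congr rfl
        intro a ha
        rw [Finset.mem_range] at ha
        apply Finset.sum_congr rfl
        intro b hb
        rw [Finset.mem_range] at hb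
        rw [qb (by omega : a ≤ n), qb (by omega : b ≤ m), pow_add, pow_add]
        simp only [eq2]
        try ring
end final
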